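/- Let n ≥ 1, let R be a commutative ring, let X₁,…,Xₙ ∈ R, let 1 ≤ i ≤ n and let j ≥ 0 be an integer. Then ∑_{k=1}^{n} (−1)^{k−1} · e_{k−1}(X_{n−i+2},…,Xₙ) · h_{j−k+1}(X₁,…,Xₙ) = h_j(X₁,…,X_{n−i+1}). -/

import Mathlib

/-- The complete homogeneous symmetric polynomial of degree `k` in the variables given by the
list `l`: the sum of all monomials of total degree `k`. -/
def hh {R : Type*} [CommSemiring R] (k : ℕ) (l : List R) : R :=
  ∑ a ∈ Finset.Nat.antidiagonalTuple l.length k, ∏ i : Fin l.length, l.get i ^ a i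

/-- The complete homogeneous symmetric function of integer degree `k`, equal to `0` for
negative `k`. -/
def hZ {R : Type*} [CommSemiring R] (k : ℤ) (l : List R) : R :=
  if 0 ≤ k then hh k.toNat l else 0

/-- The elementary symmetric polynomial of degree `k` in the variables given by the list `l`. -/
def ee {R : Type*} [CommSemiring R] (k : ℕ) (l : List R) : R :=
  ∑ s ∈ Finset.powersetCard k (Finset.univ : Finset (Fin l.length)), ∏ i ∈ s, l.get i

/-- The list of variables X_a, X_{a+1}, …, X_b (empty if a > b). -/
def seg {R : Type*} (X : ℕ → R) (a b : ℕ) : List R :=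
  (List.range (b + 1 - a)).map fun t => X (a + t)

/-!
Write the variables as `B ++ A` with `B = (X_{n-i+2}, …, Xₙ)` and `A = (X₁, …, X_{n-i+1})`; this
reordering is harmless because `h` is symmetric, as its generating series is the product of the
series `∑ₘ yᵐ tᵐ` over the variables `y`. The claim is then
`∑ₖ (-1)ᵏ eₖ(B) h_{j-k}(B ++ A) = hⱼ(A)`, proved by induction on `B`: peeling off the first
variable `y` of `B`, the recursions `eₖ(y :: B) = eₖ(B) + y e_{k-1}(B)` and
`hⱼ(y :: C) = hⱼ(C) + y h_{j-1}(y :: C)` turn the sum for `y :: B` into the sum for `B`.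
-/

open Finset

theorem Finset.Nat.sum_antidiagonalTuple_succ {M : Type*} [AddCommMonoid M] (m k : ℕ)
    (f : (Fin (m + 1) → ℕ) → M) :
    ∑ a ∈ Nat.antidiagonalTuple (m + 1) k, f a =
      ∑ p ∈ antidiagonal k, ∑ x ∈ Nat.antidiagonalTuple m p.2, f (Fin.cons p.1 x) := by
  simp only [Finset.sum, Nat.antidiagonalTuple, Multiset.Nat.antidiagonalTuple,
    List.Nat.antidiagonalTuple, Multiset.map_coe, Multiset.sum_coe, List.flatMap_def,
    List.map_flatten, List.sum_flatten, List.map_map, Function.comp_def]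
  rfl

section CommSemiring

variable {R : Type*} [CommSemiring R]

theorem hh_zero (l : List R) : hh 0 l = 1 := by
  simp [hh, Finset.Nat.antidiagonalTuple_zero_right]

theorem hh_cons (k : ℕ) (y : R) (l : List R) :
    hh k (y :: l) = ∑ p ∈ antidiagonal k, y ^ p.1 * hh p.2 l := by
  simp [hh, Finset.Nat.sum_antidiagonalTuple_succ, mul_sum, Fin.prod_univ_succ]

theorem hh_succ_cons (k : ℕ) (y : R) (l : List R) :
    hh (k + 1) (y :: l) = hh (k + 1) l + y * hh k (y :: l) := by
  rw [hh_cons, hh_cons, Finset.Nat.sum_antidiagonal_succ, mul_sum]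
  simp only [pow_zero, one_mul, pow_succ, mul_assoc, mul_left_comm y]

def hhSeries (l : List R) : PowerSeries R := PowerSeries.mk (hh · l)

theorem hhSeries_cons (y : R) (l : List R) :
    hhSeries (y :: l) = PowerSeries.mk (y ^ ·) * hhSeries l := by
  ext k
  simp [hhSeries, PowerSeries.coeff_mul, hh_cons]

theorem hh_perm {l₁ l₂ : List R} (h : l₁.Perm l₂) (k : ℕ) : hh k l₁ = hh k l₂ := by
  have hseries : hhSeries l₁ = hhSeries l₂ := by
    induction h with
    | nil => rfl
    | cons y _ ih => rw [hhSeries_cons, hhSeries_cons, ih]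
    | swap y z l => simp only [hhSeries_cons, mul_left_comm]
    | trans _ _ ih₁ ih₂ => exact ih₁.trans ih₂
  simpa [hhSeries] using congrArg (PowerSeries.coeff k) hseries

theorem hZ_natCast (m : ℕ) (l : List R) : hZ m l = hh m l := by
  simp [hZ]

theorem hZ_of_neg {j : ℤ} (hj : j < 0) (l : List R) : hZ j l = 0 :=
  if_neg hj.not_ge

theorem hZ_perm {l₁ l₂ : List R} (h : l₁.Perm l₂) (j : ℤ) : hZ j l₁ = hZ j l₂ := by
  simp only [hZ, hh_perm h]

theorem hZ_cons (j : ℤ) (y : R) (l : List R) :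
    hZ j (y :: l) = hZ j l + y * hZ (j - 1) (y :: l) := by
  rcases j with (_ | m) | m
  · simp [hZ, hh_zero]
  · simpa [hZ, show (0 : ℤ) ≤ m + 1 by omega] using hh_succ_cons m y l
  · simp [hZ_of_neg, Int.negSucc_lt_zero]

theorem ee_eq_esymm (k : ℕ) (l : List R) : ee k l = (l : Multiset R).esymm k := by
  rw [← List.ofFn_get l, ← Fin.univ_val_map, Finset.esymm_map_val, List.ofFn_get]
  rfl

theorem ee_zero (l : List R) : ee 0 l = 1 := by
  simp [ee]

theorem ee_of_length_lt {k : ℕ} {l : List R} (h : l.length < k) : ee k l = 0 := by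
  rw [ee, Finset.powersetCard_eq_empty.2 (by rwa [Finset.card_univ, Fintype.card_fin]), sum_empty]

theorem ee_succ_cons (k : ℕ) (y : R) (l : List R) :
    ee (k + 1) (y :: l) = ee (k + 1) l + y * ee k l := by
  simp only [ee_eq_esymm, ← Multiset.cons_coe, Multiset.esymm, Multiset.powersetCard_cons,
    Multiset.map_add, Multiset.sum_add, Multiset.map_map, Function.comp_def, Multiset.prod_cons,
    Multiset.sum_map_mul_left]

end CommSemiring

section CommRing

variable {R : Type*} [CommRing R]

theorem sum_range_neg_one_pow_mul_ee_mul_hZ_append (B A : List R) (j : ℤ) {N : ℕ}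
    (hN : B.length < N) :
    ∑ k ∈ range N, (-1) ^ k * ee k B * hZ (j - k) (B ++ A) = hZ j A := by
  obtain ⟨M, rfl⟩ : ∃ M, N = M + 1 := Nat.exists_eq_add_one.2 (by omega)
  induction B with
  | nil =>
    rw [sum_range_succ']
    simp [ee_zero, ee_of_length_lt]
  | cons y B ih =>
    set C := B ++ A
    have hB : ee M B = 0 := ee_of_length_lt (by simpa using hN)
    have hC (k : ℕ) :
        hZ (j - k) C = hZ (j - k) (y :: C) - y * hZ (j - (k + 1 : ℕ)) (y :: C) := by
      rw [hZ_cons, Nat.cast_succ, sub_add_eq_sub_sub, add_sub_cancel_right]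
    rw [← ih (by simp at hN; omega), List.cons_append]
    simp only [hC, mul_sub, sum_sub_distrib]
    rw [sum_range_succ', sum_range_succ' (fun k => _ * hZ (j - k) (y :: C)), sum_range_succ _ M, hB,
      mul_zero, zero_mul, add_zero, add_sub_right_comm, ← sum_sub_distrib]
    congr 1
    · exact sum_congr rfl fun k _ => by rw [ee_succ_cons]; ring
    · rw [ee_zero, ee_zero]

end CommRing

theorem seg_append {R : Type*} (X : ℕ → R) {a b c : ℕ} (hab : a ≤ b + 1) (hbc : b ≤ c) :
    seg X a b ++ seg X (b + 1) c = seg X a c := by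
  unfold seg
  rw [show c + 1 - a = (b + 1 - a) + (c + 1 - (b + 1)) by omega, List.range_add,
    List.map_append, List.map_map]
  congr 1
  refine List.map_congr_left fun t _ => ?_
  show X (b + 1 + t) = X (a + (b + 1 - a + t))
  congr 1
  omega

theorem seg_length {R : Type*} (X : ℕ → R) (a b : ℕ) : (seg X a b).length = b + 1 - a := by
  simp [seg]

theorem stmt10_general {R : Type*} [CommRing R] (n : ℕ) (X : ℕ → R) (i : ℕ)
    (hi1 : 1 ≤ i) (hin : i ≤ n) (j : ℕ) :
    ∑ k ∈ Finset.Icc 1 n,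
        (-1 : R) ^ (k - 1) * ee (k - 1) (seg X (n + 2 - i) n) *
          hZ ((j : ℤ) - k + 1) (seg X 1 n) =
      hh j (seg X 1 (n + 1 - i)) := by
  have hperm : (seg X 1 n).Perm (seg X (n + 2 - i) n ++ seg X 1 (n + 1 - i)) := by
    rw [← seg_append X (b := n + 1 - i) (by omega) (by omega),
      show n + 1 - i + 1 = n + 2 - i by omega]
    exact List.perm_append_comm
  have hlength : (seg X (n + 2 - i) n).length < n := by
    rw [seg_length]
    omega
  rw [← hZ_natCast, ← sum_range_neg_one_pow_mul_ee_mul_hZ_append _ _ _ hlength,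
    ← Finset.Ico_add_one_right_eq_Icc, sum_Ico_eq_sum_range, add_tsub_cancel_right]
  refine sum_congr rfl fun k _ => ?_
  rw [hZ_perm hperm, add_tsub_cancel_left]
  congr 2
  push_cast
  ring

/-- The entry simplification of Section 7.4:
∑_{k=1}^{n} (−1)^{k−1} e_{k−1}(X_{n−i+2},…,Xₙ) h_{j−k+1}(X₁,…,Xₙ) = h_j(X₁,…,X_{n−i+1}). -/
theorem stmt10 {R : Type*} [CommRing R] (n : ℕ) (hn : 1 ≤ n) (X : ℕ → R) (i : ℕ)
    (hi1 : 1 ≤ i) (hin : i ≤ n) (j : ℕ) :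
    ∑ k ∈ Finset.Icc 1 n,
        (-1 : R) ^ (k - 1) * ee (k - 1) (seg X (n + 2 - i) n) *
          hZ ((j : ℤ) - k + 1) (seg X 1 n) =
      hh j (seg X 1 (n + 1 - i)) :=
  stmt10_general n X i hi1 hin j
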